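/- (Entropy lower bound for codeword types) Let F = {F_n: X^n → Y^{m_n}} be a sequence of δ-asymptotically good random linear codes with sup-rate R̄ < ∞. Then the limit inferior in probability, as n → ∞, of min over nonzero x ∈ X^n of [(H(P_x) + δ)·R̄ + H(P_{F_n(x)})] is at least ln|Y|. In particular, for δ = 0, all nonzero low-entropy inputs are mapped to high-entropy outputs. -/

import Mathlib

open Finset Filter

open scoped Classical

noncomputable def empDist {X : Type*} [Fintype X] {n : ℕ} (x : Fin n → X) : X → ℝ :=
  fun a => ((univ.filter fun i => x i = a).card : ℝ) / n

noncomputable def specS {X : Type*} [Fintype X] {n : ℕ}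
    (A : Finset (Fin n → X)) (P : X → ℝ) : ℝ :=
  ((A.filter fun x => empDist x = P).card : ℝ) / (A.card : ℝ)

noncomputable def jointSpec {X Y : Type*} [Fintype X] [Fintype Y] {n m : ℕ}
    (f : (Fin n → X) → (Fin m → Y)) (P : X → ℝ) (Q : Y → ℝ) : ℝ :=
  ((univ.filter fun x : Fin n → X => empDist x = P ∧ empDist (f x) = Q).card : ℝ) /
    ((Fintype.card X : ℝ) ^ n)

noncomputable def fullJointSpec (X Y : Type*) [Fintype X] [Fintype Y] (n m : ℕ)
    (P : X → ℝ) (Q : Y → ℝ) : ℝ :=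
  specS (univ : Finset (Fin n → X)) P * specS (univ : Finset (Fin m → Y)) Q

noncomputable def alphaE {X Y : Type*} [Fintype X] [Fintype Y] {n m : ℕ} {Ω : Type*}
    [Fintype Ω] (μ : Ω → ℝ) (F : Ω → (Fin n → X) → (Fin m → Y))
    (P : X → ℝ) (Q : Y → ℝ) : ℝ :=
  (∑ ω, μ ω * jointSpec (F ω) P Q) / fullJointSpec X Y n m P Q

def permAct {X : Type*} {n : ℕ} (σ : Equiv.Perm (Fin n)) (x : Fin n → X) : Fin n → X :=
  fun i => x (σ.symm i)

noncomputable def entH {X : Type*} [Fintype X] (P : X → ℝ) : ℝ :=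
  ∑ a, -(P a * Real.log (P a))

noncomputable def binEnt (x : ℝ) : ℝ := -(x * Real.log x) - (1 - x) * Real.log (1 - x)

/-!
Union bound over types. Nonzero inputs of type `P` (class `T_P = typeClass n P`) mapped to
outputs of type `Q` are counted by `jointSpec`, and the hypothesis `α ≤ exp (n (δ + ε))` bounds
their expected number by `exp (n (δ + ε)) |T_P| |T_Q| / |Y|^m ≤ exp (n (δ + ε + H P) + m (H Q -
ln |Y|))`. When `(H P + δ) R̄ + H Q < β < ln |Y|` and `n ≤ m (R̄ + ε)`, this is at most
`exp (-m γ)` with `γ > 0`, while there are only polynomially many pairs of types; and `m → ∞`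
because `R̄ < ∞`. The hypothesis also forces `δ ≥ 0`: for a fixed input type `P`, the values
`α (P, Q)` average to `1` against the weights `|T_P| |T_Q| / |Y|^m`, which sum to `|T_P|` over
the output types `Q`.
-/

open Real

noncomputable def typeSet (X : Type*) [Fintype X] (n : ℕ) : Finset (X → ℝ) :=
  univ.image (empDist (X := X) (n := n))

noncomputable def typeClass {X : Type*} [Fintype X] (n : ℕ) (P : X → ℝ) : Finset (Fin n → X) :=
  univ.filter fun x => empDist x = P

section Types

variable {X : Type*} [Fintype X] {n : ℕ}

lemma empDist_mem_typeSet (x : Fin n → X) : empDist x ∈ typeSet X n :=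
  mem_image_of_mem _ (mem_univ x)

lemma mem_typeClass_self (x : Fin n → X) : x ∈ typeClass n (empDist x) := by
  simp [typeClass]

lemma card_typeClass_pos {P : X → ℝ} (hP : P ∈ typeSet X n) : 0 < #(typeClass n P) := by
  obtain ⟨x, -, rfl⟩ := mem_image.1 hP
  exact card_pos.2 ⟨x, mem_typeClass_self x⟩

lemma empDist_nonneg (x : Fin n → X) (a : X) : 0 ≤ empDist x a := by
  unfold empDist; positivity

lemma empDist_le_one (x : Fin n → X) (a : X) : empDist x a ≤ 1 :=
  div_le_one_of_le₀ (by exact_mod_cast (card_filter_le _ _).trans_eq (card_fin n)) n.cast_nonneg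

lemma empDist_apply_self_pos (x : Fin n → X) (i : Fin n) : 0 < empDist x (x i) := by
  have : 0 < #(univ.filter fun j => x j = x i) := card_pos.2 ⟨i, by simp⟩
  have : 0 < n := i.pos
  unfold empDist; positivity

lemma card_filter_eq_mul_empDist (hn : 0 < n) (x : Fin n → X) (a : X) :
    (#(univ.filter fun i => x i = a) : ℝ) = n * empDist x a := by
  unfold empDist; field_simp

lemma sum_empDist (hn : 0 < n) (x : Fin n → X) : ∑ a, empDist x a = 1 := by
  unfold empDist
  rw [← sum_div, ← Nat.cast_sum, ← card_eq_sum_card_fiberwise fun i _ => mem_univ (x i),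
    card_univ, Fintype.card_fin]
  exact div_self (by positivity)

lemma entH_eq_sum_negMulLog (P : X → ℝ) : entH P = ∑ a, negMulLog (P a) := by
  simp [entH, negMulLog]

lemma entH_empDist_nonneg (x : Fin n → X) : 0 ≤ entH (empDist x) := by
  rw [entH_eq_sum_negMulLog]
  exact sum_nonneg fun a _ => negMulLog_nonneg (empDist_nonneg x a) (empDist_le_one x a)

lemma entH_empDist_le_card (x : Fin n → X) : entH (empDist x) ≤ Fintype.card X := by
  rw [entH_eq_sum_negMulLog]
  calc ∑ a, negMulLog (empDist x a) ≤ ∑ _a : X, (1 : ℝ) :=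
        sum_le_sum fun a _ => (negMulLog_le_one_sub_self (empDist_nonneg x a)).trans
          (by linarith [empDist_nonneg x a])
    _ = Fintype.card X := by simp

lemma empDist_ne_empDist_zero [Zero X] (hn : 0 < n) {x : Fin n → X} (hx : x ≠ 0) :
    empDist x ≠ empDist (0 : Fin n → X) := by
  intro h
  have hcard : (#(univ.filter fun i => x i = 0) : ℝ) = #(univ : Finset (Fin n)) := by
    rw [card_filter_eq_mul_empDist hn, h, card_univ, Fintype.card_fin]
    simp [empDist, hn.ne']
  exact hx (funext fun i => card_filter_eq_iff.1 (by exact_mod_cast hcard) i (mem_univ i))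

lemma card_typeSet_le : #(typeSet X n) ≤ (n + 1) ^ Fintype.card X := by
  have hsub : typeSet X n ⊆
      (univ : Finset (X → Fin (n + 1))).image fun c a => ((c a : ℕ) : ℝ) / n := by
    intro P hP
    obtain ⟨x, -, rfl⟩ := mem_image.1 hP
    refine mem_image.2 ⟨fun a => ⟨#(univ.filter fun i => x i = a), ?_⟩, mem_univ _, rfl⟩
    exact Nat.lt_succ_of_le ((card_filter_le _ _).trans_eq (card_fin n))
  calc #(typeSet X n) ≤ #(univ : Finset (X → Fin (n + 1))) :=
        (card_le_card hsub).trans card_image_le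
    _ = (n + 1) ^ Fintype.card X := by simp

lemma prod_empDist_of_mem_typeClass (hn : 0 < n) (x : Fin n → X) {y : Fin n → X}
    (hy : y ∈ typeClass n (empDist x)) :
    ∏ i, empDist x (y i) = exp (-(n * entH (empDist x))) := by
  have hy : empDist y = empDist x := (mem_filter.1 hy).2
  rw [← hy, ← prod_congr rfl fun i _ => exp_log (empDist_apply_self_pos y i), ← exp_sum,
    ← sum_fiberwise univ y fun i => log (empDist y (y i))]
  congr 1
  simp only [entH, mul_sum, ← sum_neg_distrib]
  refine sum_congr rfl fun a _ => ?_
  rw [sum_congr rfl fun i hi => by rw [(mem_filter.1 hi).2], sum_const, nsmul_eq_mul,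
    card_filter_eq_mul_empDist hn]
  ring

lemma card_typeClass_le (hn : 0 < n) (x : Fin n → X) :
    (#(typeClass n (empDist x)) : ℝ) ≤ exp (n * entH (empDist x)) := by
  have h : (#(typeClass n (empDist x)) : ℝ) * exp (-(n * entH (empDist x))) ≤ 1 :=
    calc (#(typeClass n (empDist x)) : ℝ) * exp (-(n * entH (empDist x)))
        = ∑ y ∈ typeClass n (empDist x), ∏ i, empDist x (y i) := by
          rw [sum_congr rfl fun y hy => prod_empDist_of_mem_typeClass hn x hy, sum_const,
            nsmul_eq_mul]
      _ ≤ ∑ y : Fin n → X, ∏ i, empDist x (y i) := by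
          refine sum_le_sum_of_subset_of_nonneg (subset_univ _) fun y _ _ => ?_
          exact prod_nonneg fun i _ => empDist_nonneg x (y i)
      _ = 1 := by rw [← Fintype.sum_pow, sum_empDist hn, one_pow]
  rwa [exp_neg, ← div_eq_mul_inv, div_le_one (exp_pos _)] at h

lemma sum_card_filter_empDist_eq {α Y : Type*} [Fintype Y] {m : ℕ} (s : Finset α)
    (h : α → Fin m → Y) :
    ∑ Q ∈ typeSet Y m, #(s.filter fun a => empDist (h a) = Q) = #s :=
  (card_eq_sum_card_fiberwise fun a _ => empDist_mem_typeSet (h a)).symm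

lemma sum_card_typeClass : ∑ P ∈ typeSet X n, #(typeClass n P) = Fintype.card X ^ n := by
  simpa [typeClass] using sum_card_filter_empDist_eq (univ : Finset (Fin n → X)) id

end Types

section Codes

variable {X Y : Type*} [Fintype X] [Fintype Y] {n m : ℕ} {Ω : Type*} [Fintype Ω]

lemma fullJointSpec_eq (P : X → ℝ) (Q : Y → ℝ) :
    fullJointSpec X Y n m P Q = #(typeClass n P) / (Fintype.card X : ℝ) ^ n *
      (#(typeClass m Q) / (Fintype.card Y : ℝ) ^ m) := by
  simp [fullJointSpec, specS, typeClass]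

lemma jointSpec_nonneg (g : (Fin n → X) → Fin m → Y) (P : X → ℝ) (Q : Y → ℝ) :
    0 ≤ jointSpec g P Q := by
  unfold jointSpec; positivity

lemma card_pow_mul_jointSpec [Nonempty X] (g : (Fin n → X) → Fin m → Y) (P : X → ℝ)
    (Q : Y → ℝ) :
    (Fintype.card X : ℝ) ^ n * jointSpec g P Q =
      #((typeClass n P).filter fun x => empDist (g x) = Q) := by
  rw [jointSpec, typeClass, filter_filter, mul_div_cancel₀ _ (by positivity)]

lemma card_pow_mul_sum_jointSpec (μ : Ω → ℝ) (f : Ω → (Fin n → X) → Fin m → Y)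
    {P : X → ℝ} {Q : Y → ℝ} (hP : P ∈ typeSet X n) (hQ : Q ∈ typeSet Y m) :
    (Fintype.card X : ℝ) ^ n * ∑ ω, μ ω * jointSpec (f ω) P Q =
      alphaE μ f P Q * (#(typeClass n P) * #(typeClass m Q) / (Fintype.card Y : ℝ) ^ m) := by
  have hP' : (0 : ℝ) < #(typeClass n P) := by exact_mod_cast card_typeClass_pos hP
  have hQ' : (0 : ℝ) < #(typeClass m Q) := by exact_mod_cast card_typeClass_pos hQ
  have hX : (0 : ℝ) < Fintype.card X ^ n := by
    exact_mod_cast (card_typeClass_pos hP).trans_le ((card_le_univ _).trans_eq (by simp))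
  have hY : (0 : ℝ) < Fintype.card Y ^ m := by
    exact_mod_cast (card_typeClass_pos hQ).trans_le ((card_le_univ _).trans_eq (by simp))
  rw [alphaE, fullJointSpec_eq]
  field_simp

lemma exists_one_le_alphaE [Nonempty X] [Nonempty Y] (μ : Ω → ℝ) (hμ : ∑ ω, μ ω = 1)
    (f : Ω → (Fin n → X) → Fin m → Y) (x : Fin n → X) :
    ∃ y : Fin m → Y, 1 ≤ alphaE μ f (empDist x) (empDist y) := by
  let w : (Y → ℝ) → ℝ := fun Q =>
    #(typeClass n (empDist x)) * #(typeClass m Q) / (Fintype.card Y : ℝ) ^ m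
  have hw : ∑ Q ∈ typeSet Y m, w Q = #(typeClass n (empDist x)) := by
    simp only [w, ← sum_div, ← mul_sum, ← Nat.cast_sum, sum_card_typeClass]
    push_cast
    field_simp
  have hαw : ∑ Q ∈ typeSet Y m, alphaE μ f (empDist x) Q * w Q = #(typeClass n (empDist x)) := by
    rw [← sum_congr rfl fun Q hQ => card_pow_mul_sum_jointSpec μ f (empDist_mem_typeSet x) hQ]
    simp_rw [mul_sum, mul_left_comm _ (μ _), card_pow_mul_jointSpec]
    rw [sum_comm]
    simp_rw [← mul_sum, ← Nat.cast_sum, sum_card_filter_empDist_eq, ← sum_mul, hμ, one_mul]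
  obtain ⟨Q, hQ, hle⟩ := exists_le_of_sum_le
    ⟨_, empDist_mem_typeSet (Classical.arbitrary (Fin m → Y))⟩ (hw.trans hαw.symm).le
  obtain ⟨y, -, rfl⟩ := mem_image.1 hQ
  have hwpos : 0 < w (empDist y) := by
    have := card_typeClass_pos (empDist_mem_typeSet x)
    have := card_typeClass_pos (empDist_mem_typeSet y)
    positivity
  exact ⟨y, le_of_mul_le_mul_right (by rwa [one_mul]) hwpos⟩

lemma card_pow_mul_sum_jointSpec_le_exp (hn : 0 < n) (hm : 0 < m) (μ : Ω → ℝ)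
    (f : Ω → (Fin n → X) → Fin m → Y) (x : Fin n → X) (y : Fin m → Y) {b : ℝ}
    (hα : alphaE μ f (empDist x) (empDist y) ≤ exp b) :
    (Fintype.card X : ℝ) ^ n * ∑ ω, μ ω * jointSpec (f ω) (empDist x) (empDist y) ≤
      exp (b + n * entH (empDist x) + m * entH (empDist y) - m * log (Fintype.card Y)) := by
  have hY : (Fintype.card Y : ℝ) ^ m = exp (m * log (Fintype.card Y)) := by
    have : Nonempty Y := ⟨y ⟨0, hm⟩⟩
    rw [← log_pow, exp_log (by positivity)]
  rw [card_pow_mul_sum_jointSpec μ f (empDist_mem_typeSet x) (empDist_mem_typeSet y), hY,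
    exp_sub, exp_add, exp_add, ← mul_div_assoc, ← mul_assoc]
  gcongr
  exacts [card_typeClass_le hn x, card_typeClass_le hm y]

end Codes
section UnionBound

variable {X Y : Type*} [Fintype X] [Fintype Y] [Zero X] {n m : ℕ}

noncomputable def nonzeroTypePairs (n m : ℕ) (c : (X → ℝ) → (Y → ℝ) → Prop) :
    Finset ((X → ℝ) × (Y → ℝ)) :=
  ((typeSet X n).erase (empDist (0 : Fin n → X)) ×ˢ typeSet Y m).filter fun PQ => c PQ.1 PQ.2

lemma card_nonzeroTypePairs_le (c : (X → ℝ) → (Y → ℝ) → Prop) :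
    #(nonzeroTypePairs n m c) ≤ (n + 1) ^ Fintype.card X * (m + 1) ^ Fintype.card Y :=
  calc #(nonzeroTypePairs n m c)
      ≤ #((typeSet X n).erase (empDist (0 : Fin n → X)) ×ˢ typeSet Y m) := card_filter_le _ _
    _ ≤ #(typeSet X n) * #(typeSet Y m) := by
        rw [card_product]; exact Nat.mul_le_mul_right _ (card_erase_le)
    _ ≤ _ := Nat.mul_le_mul card_typeSet_le card_typeSet_le

lemma mk_mem_nonzeroTypePairs (hn : 0 < n) {c : (X → ℝ) → (Y → ℝ) → Prop} {x : Fin n → X}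
    (hx : x ≠ 0) (y : Fin m → Y) (hc : c (empDist x) (empDist y)) :
    (empDist x, empDist y) ∈ nonzeroTypePairs n m c :=
  mem_filter.2 ⟨mem_product.2 ⟨mem_erase.2 ⟨empDist_ne_empDist_zero hn hx,
    empDist_mem_typeSet x⟩, empDist_mem_typeSet y⟩, hc⟩

lemma exists_of_mem_nonzeroTypePairs {c : (X → ℝ) → (Y → ℝ) → Prop} {PQ : (X → ℝ) × (Y → ℝ)}
    (h : PQ ∈ nonzeroTypePairs n m c) :
    ∃ x : Fin n → X, x ≠ 0 ∧ ∃ y : Fin m → Y,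
      PQ = (empDist x, empDist y) ∧ c (empDist x) (empDist y) := by
  obtain ⟨hPQ, hc⟩ := mem_filter.1 h
  obtain ⟨hP, hQ⟩ := mem_product.1 hPQ
  obtain ⟨hP0, hP⟩ := mem_erase.1 hP
  obtain ⟨x, -, hx⟩ := mem_image.1 hP
  obtain ⟨y, -, hy⟩ := mem_image.1 hQ
  exact ⟨x, fun h0 => hP0 (by rw [← hx, h0]), y, by rw [hx, hy], by rwa [hx, hy]⟩

lemma one_le_sum_card_pow_mul_jointSpec (hn : 0 < n) (g : (Fin n → X) → Fin m → Y)
    {c : (X → ℝ) → (Y → ℝ) → Prop} {x : Fin n → X} (hx : x ≠ 0)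
    (hc : c (empDist x) (empDist (g x))) :
    1 ≤ ∑ PQ ∈ nonzeroTypePairs n m c, (Fintype.card X : ℝ) ^ n * jointSpec g PQ.1 PQ.2 := by
  refine le_trans ?_ (single_le_sum (fun PQ _ => mul_nonneg (by positivity)
    (jointSpec_nonneg g _ _)) (mk_mem_nonzeroTypePairs hn hx (g x) hc))
  rw [card_pow_mul_jointSpec]
  exact Nat.one_le_cast.2 (card_pos.2 ⟨x, mem_filter.2 ⟨mem_typeClass_self x, rfl⟩⟩)

lemma exponent_le_of_le_rate {n m δ R ε β L c H H' : ℝ} (hm : 0 ≤ m) (hnm : n ≤ (R + ε) * m)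
    (hδ : 0 ≤ δ) (hε : 0 ≤ ε) (hH : 0 ≤ H) (hHc : H ≤ c) (hβ : (H + δ) * R + H' < β)
    (hεβ : ε * (c + δ + R + ε) ≤ (L - β) / 2) :
    n * (δ + ε) + n * H + m * H' - m * L ≤ -((L - β) / 2 * m) := by
  have h₁ : n * (H + δ + ε) ≤ (R + ε) * m * (H + δ + ε) :=
    mul_le_mul_of_nonneg_right hnm (by linarith)
  have h₂ : m * (ε * (H + δ + R + ε)) ≤ m * (ε * (c + δ + R + ε)) := by gcongr
  nlinarith [mul_le_mul_of_nonneg_left hβ.le hm, mul_le_mul_of_nonneg_left hεβ hm]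

variable {Ω : Type*} [Fintype Ω]

theorem sum_filter_exists_low_entropy_le (hn : 0 < n) (hm : 0 < m) (μ : Ω → ℝ)
    (hμ : ∀ ω, 0 ≤ μ ω) (f : Ω → (Fin n → X) → Fin m → Y) {δ R ε β : ℝ} (hδ : 0 ≤ δ)
    (hε : 0 ≤ ε) (hεβ : ε * (Fintype.card X + δ + R + ε) ≤ (log (Fintype.card Y) - β) / 2)
    (hα : ∀ x : Fin n → X, x ≠ 0 → ∀ y : Fin m → Y,
      alphaE μ f (empDist x) (empDist y) ≤ exp (n * (δ + ε)))
    (hnm : (n : ℝ) / m ≤ R + ε) :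
    ∑ ω ∈ univ.filter (fun ω : Ω => ∃ x : Fin n → X, x ≠ 0 ∧
        (entH (empDist x) + δ) * R + entH (empDist (f ω x)) < β), μ ω ≤
      (n + 1) ^ Fintype.card X * (m + 1) ^ Fintype.card Y *
        exp (-((log (Fintype.card Y) - β) / 2 * m)) := by
  set S := nonzeroTypePairs n m fun (P : X → ℝ) (Q : Y → ℝ) => (entH P + δ) * R + entH Q < β
  set N : Ω → ℝ := fun ω => ∑ PQ ∈ S, (Fintype.card X : ℝ) ^ n * jointSpec (f ω) PQ.1 PQ.2
  have hN : ∀ ω, 0 ≤ N ω := fun ω =>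
    sum_nonneg fun PQ _ => mul_nonneg (by positivity) (jointSpec_nonneg _ _ _)
  calc _ ≤ ∑ ω, μ ω * N ω := by
        rw [sum_filter]
        refine sum_le_sum fun ω _ => ?_
        split_ifs with hω
        · obtain ⟨x, hx, hc⟩ := hω
          exact le_mul_of_one_le_right (hμ ω) (one_le_sum_card_pow_mul_jointSpec hn (f ω) hx hc)
        · exact mul_nonneg (hμ ω) (hN ω)
    _ = ∑ PQ ∈ S, (Fintype.card X : ℝ) ^ n * ∑ ω, μ ω * jointSpec (f ω) PQ.1 PQ.2 := by
        simp only [N, mul_sum]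
        rw [sum_comm]
        simp only [mul_left_comm]
    _ ≤ ∑ _PQ ∈ S, exp (-((log (Fintype.card Y) - β) / 2 * m)) := by
        refine sum_le_sum fun PQ hPQ => ?_
        obtain ⟨x, hx, y, rfl, hc⟩ := exists_of_mem_nonzeroTypePairs hPQ
        refine (card_pow_mul_sum_jointSpec_le_exp hn hm μ f x y (hα x hx y)).trans
          (exp_le_exp.2 (exponent_le_of_le_rate (by positivity) ?_ hδ hε
            (entH_empDist_nonneg x) (entH_empDist_le_card x) hc hεβ))
        rwa [div_le_iff₀ (by positivity)] at hnm
    _ ≤ _ := by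
        rw [sum_const, nsmul_eq_mul]
        gcongr
        exact_mod_cast card_nonzeroTypePairs_le _

end UnionBound

section Asymptotics

lemma exists_pos_mul_add_self_le (a : ℝ) {b : ℝ} (hb : 0 < b) : ∃ ε > 0, ε * (a + ε) ≤ b := by
  have h : Tendsto (fun ε : ℝ => ε * (a + ε)) (nhdsWithin 0 (Set.Ioi 0)) (nhds 0) := by
    have : Continuous fun ε : ℝ => ε * (a + ε) := by fun_prop
    simpa using (this.tendsto 0).mono_left nhdsWithin_le_nhds
  obtain ⟨ε, hεb, hε⟩ := ((h.eventually (ge_mem_nhds hb)).and self_mem_nhdsWithin).exists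
  exact ⟨ε, hε, hεb⟩

lemma tendsto_succ_pow_mul_exp_neg_mul (d : ℕ) {c : ℝ} (hc : 0 < c) :
    Tendsto (fun k : ℕ => ((k : ℝ) + 1) ^ d * exp (-(c * k))) atTop (nhds 0) := by
  have h := ((tendsto_rpow_mul_exp_neg_mul_atTop_nhds_zero d c hc).comp
    (tendsto_atTop_add_const_right _ 1 tendsto_natCast_atTop_atTop)).const_mul (exp c)
  rw [mul_zero] at h
  refine h.congr fun k => ?_
  rw [Function.comp_apply, rpow_natCast, show -c * ((k : ℝ) + 1) = -(c * k) + -c by ring,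
    exp_add, exp_neg c]
  field_simp

lemma tendsto_atTop_of_eventually_div_le {m : ℕ → ℕ} (hm : ∀ n, 0 < m n) {R : ℝ}
    (h : ∀ᶠ n : ℕ in atTop, (n : ℝ) / m n ≤ R) : Tendsto m atTop atTop := by
  have hR : 0 < max R 1 := lt_max_of_lt_right one_pos
  refine (tendsto_natCast_atTop_iff (R := ℝ)).1 (tendsto_atTop_mono' _ ?_
    (tendsto_natCast_atTop_atTop.atTop_div_const hR))
  filter_upwards [h] with n hn
  rw [div_le_iff₀ (by exact_mod_cast hm n)] at hn
  rw [div_le_iff₀ hR]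
  nlinarith [le_max_left R 1]

lemma succ_pow_mul_succ_pow_le {n m : ℕ} (hm : 0 < m) {R : ℝ} (hnm : (n : ℝ) / m ≤ R) (a b : ℕ) :
    ((n : ℝ) + 1) ^ a * ((m : ℝ) + 1) ^ b ≤ (R + 1) ^ a * ((m : ℝ) + 1) ^ (a + b) := by
  have hR : 0 ≤ R := (div_nonneg n.cast_nonneg m.cast_nonneg).trans hnm
  rw [pow_add, ← mul_assoc, ← mul_pow]
  gcongr
  rw [div_le_iff₀ (by positivity)] at hnm
  nlinarith

end Asymptotics

lemma nonneg_of_eventually_alphaE_le {X Y : Type*} [Fintype X] [Fintype Y] [Zero X]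
    [Nontrivial X] [Nonempty Y] {m : ℕ → ℕ} {Ω : ℕ → Type*} [∀ n, Fintype (Ω n)]
    {μ : ∀ n, Ω n → ℝ} (hμ : ∀ n, ∑ ω, μ n ω = 1) {f : ∀ n, Ω n → (Fin n → X) → Fin (m n) → Y}
    {δ : ℝ} (hδ : ∀ ε > (0 : ℝ), ∀ᶠ n : ℕ in atTop, ∀ x : Fin n → X, x ≠ 0 →
      ∀ y : Fin (m n) → Y, alphaE (μ n) (f n) (empDist x) (empDist y) ≤ exp (n * (δ + ε))) :
    0 ≤ δ := by
  by_contra! hδ0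
  obtain ⟨n, hα, hn⟩ := ((hδ (-δ / 2) (by linarith)).and (eventually_gt_atTop 0)).exists
  obtain ⟨a, ha⟩ := exists_ne (0 : X)
  have hx : (fun _ : Fin n => a) ≠ 0 := fun h => ha (congrFun h ⟨0, hn⟩)
  obtain ⟨y, hy⟩ := exists_one_le_alphaE (μ n) (hμ n) (f n) fun _ : Fin n => a
  have := one_le_exp_iff.1 (hy.trans (hα _ hx y))
  have : (0 : ℝ) < n := by exact_mod_cast hn
  nlinarith

theorem stmt15 {X Y : Type*} [Fintype X] [Fintype Y] [AddCommGroup X] [AddCommGroup Y]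
    (m : ℕ → ℕ) (hm : ∀ n, 0 < m n)
    (Ω : ℕ → Type*) [∀ n, Fintype (Ω n)] (μ : ∀ n, Ω n → ℝ)
    (hμ0 : ∀ n ω, 0 ≤ μ n ω) (hμ1 : ∀ n, ∑ ω, μ n ω = 1)
    (F : ∀ n, Ω n → ((Fin n → X) →+ (Fin (m n) → Y)))
    (δ Rbar : ℝ)
    (hδ : ∀ ε > (0 : ℝ), ∀ᶠ n : ℕ in atTop, ∀ x : Fin n → X, x ≠ 0 → ∀ y : Fin (m n) → Y,
      alphaE (μ n) (fun ω => ⇑(F n ω)) (empDist x) (empDist y) ≤ Real.exp (n * (δ + ε)))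
    (hR : ∀ ε > (0 : ℝ), ∀ᶠ n : ℕ in atTop, (n : ℝ) / (m n : ℝ) ≤ Rbar + ε) :
    ∀ β < Real.log (Fintype.card Y),
      Tendsto (fun n => ∑ ω ∈ univ.filter (fun ω : Ω n => ∃ x : Fin n → X, x ≠ 0 ∧
          (entH (empDist x) + δ) * Rbar + entH (empDist (F n ω x)) < β), μ n ω)
        atTop (nhds 0) := by
  intro β hβ
  rcases subsingleton_or_nontrivial X with hX | hX
  · refine tendsto_const_nhds.congr fun n => (sum_eq_zero fun ω hω => ?_).symm
    obtain ⟨x, hx, -⟩ := (mem_filter.1 hω).2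
    exact absurd (Subsingleton.elim x 0) hx
  have hδ0 : 0 ≤ δ := nonneg_of_eventually_alphaE_le hμ1 hδ
  have hγ : 0 < (log (Fintype.card Y) - β) / 2 := half_pos (sub_pos.2 hβ)
  obtain ⟨ε, hε, hεβ⟩ := exists_pos_mul_add_self_le (Fintype.card X + δ + Rbar) hγ
  have hdecay := ((tendsto_succ_pow_mul_exp_neg_mul (Fintype.card X + Fintype.card Y) hγ).comp
    (tendsto_atTop_of_eventually_div_le hm (hR 1 one_pos))).const_mul
      ((Rbar + ε + 1) ^ Fintype.card X)
  rw [mul_zero] at hdecay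
  refine squeeze_zero' (.of_forall fun n => sum_nonneg fun ω _ => hμ0 n ω) ?_ hdecay
  filter_upwards [hδ ε hε, hR ε hε, eventually_gt_atTop 0] with n hα hnm hn
  calc _ ≤ _ := sum_filter_exists_low_entropy_le hn (hm n) (μ n) (hμ0 n) (fun ω => F n ω) hδ0
          hε.le hεβ hα hnm
    _ ≤ (Rbar + ε + 1) ^ Fintype.card X * (((m n : ℝ) + 1) ^ (Fintype.card X + Fintype.card Y) *
          exp (-((log (Fintype.card Y) - β) / 2 * m n))) := by
      rw [← mul_assoc]
      exact mul_le_mul_of_nonneg_right (succ_pow_mul_succ_pow_le (hm n) hnm _ _) (exp_pos _).le
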